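/- In the block setting on ℝᵈ with q blocks, fix a block j, let λ > 0, let F : ℝᵈ → ℝ be differentiable at x*, and for each block k let Ω_k : ℝᵈ → ℝ satisfy Ω_k(x) = Ω_k(proj_k x) and Ω_k(t z) = t Ω_k(z) for all t ≥ 0, with moreover Ω_j(z) > 0 for every z ≠ 0 with proj_j z = z. Suppose x* minimizes P(x) = F(x) + λ Σ_{k∈Fin q} Ω_k(x) over ℝᵈ, and suppose there exists c < λ such that ⟨−∇F(x*), z⟩ ≤ c Ω_j(z) for every z with proj_j z = z. Then proj_j x* = 0. -/

import Mathlib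

open RealInnerProductSpace Finset

/-- Block-`j` restriction of a vector: keep the coordinates assigned to block `j`
by the block assignment `β`, zero elsewhere. -/
noncomputable def blockProj {d q : ℕ} (β : Fin d → Fin q) (j : Fin q)
    (x : EuclideanSpace ℝ (Fin d)) : EuclideanSpace ℝ (Fin d) :=
  WithLp.toLp 2 (fun i => if β i = j then x i else 0)

lemma blockProj_idem {d q : ℕ} (β : Fin d → Fin q) (j : Fin q)
    (x : EuclideanSpace ℝ (Fin d)) : blockProj β j (blockProj β j x) = blockProj β j x := by
  ext i; simp only [blockProj]; by_cases h : β i = j <;> simp [h]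

lemma blockProj_ne {d q : ℕ} (β : Fin d → Fin q) {j k : Fin q} (h : k ≠ j)
    (x : EuclideanSpace ℝ (Fin d)) : blockProj β k (blockProj β j x) = 0 := by
  ext i; simp only [blockProj]
  by_cases hb : β i = k
  · have : ¬ (β i = j) := fun hj => h (hb.symm.trans hj)
    simp [hb, this]
    intro hkj; exact absurd hkj h
  · simp [hb]

lemma blockProj_sub {d q : ℕ} (β : Fin d → Fin q) (k : Fin q)
    (x y : EuclideanSpace ℝ (Fin d)) :
    blockProj β k (x - y) = blockProj β k x - blockProj β k y := by
  ext i; simp only [blockProj, PiLp.sub_apply]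
  by_cases hb : β i = k <;> simp [hb]

lemma blockProj_smul {d q : ℕ} (β : Fin d → Fin q) (k : Fin q) (t : ℝ)
    (x : EuclideanSpace ℝ (Fin d)) :
    blockProj β k (t • x) = t • blockProj β k x := by
  ext i; simp only [blockProj, PiLp.smul_apply, smul_eq_mul]
  by_cases hb : β i = k <;> simp [hb]

/-- General form of optimality condition (4): strict dual feasibility of the
block-`j` dual certificate forces the block-`j` coefficients to vanish. -/
theorem adsgd_strict_dual_feasibility {d q : ℕ} (hd : 0 < d) (hq : 0 < q)
    (β : Fin d → Fin q) (j : Fin q)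
    (lam : ℝ) (hlam : 0 < lam)
    (F : EuclideanSpace ℝ (Fin d) → ℝ)
    (Ωb : Fin q → EuclideanSpace ℝ (Fin d) → ℝ)
    (hblock : ∀ k x, Ωb k x = Ωb k (blockProj β k x))
    (hhomog : ∀ k (t : ℝ), 0 ≤ t → ∀ z, Ωb k (t • z) = t * Ωb k z)
    (hpos : ∀ z, blockProj β j z = z → z ≠ 0 → 0 < Ωb j z)
    (P : EuclideanSpace ℝ (Fin d) → ℝ)
    (hP : P = fun x => F x + lam * ∑ k, Ωb k x)
    (xstar : EuclideanSpace ℝ (Fin d))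
    (hdiff : DifferentiableAt ℝ F xstar)
    (hmin : ∀ y, P xstar ≤ P y)
    (c : ℝ) (hc : c < lam)
    (hbound : ∀ z, blockProj β j z = z → ⟪-gradient F xstar, z⟫ ≤ c * Ωb j z) :
    blockProj β j xstar = 0 := by
  by_contra hne
  set v : EuclideanSpace ℝ (Fin d) := blockProj β j xstar with hv
  have hvproj : blockProj β j v = v := blockProj_idem β j xstar
  have hvne : v ≠ 0 := hne
  have hΩpos : 0 < Ωb j v := hpos v hvproj hvne
  -- values of Ω along the path
  have hΩxstar : Ωb j xstar = Ωb j v := hblock j xstar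
  have hsum : ∀ t : ℝ, 0 ≤ t → t ≤ 1 →
      ∑ k, Ωb k (xstar - t • v) = (∑ k, Ωb k xstar) - t * Ωb j v := by
    intro t ht ht1
    have key : ∀ k, Ωb k (xstar - t • v) =
        Ωb k xstar - (if k = j then t * Ωb j v else 0) := by
      intro k
      by_cases hk : k = j
      · subst hk
        have h1 : blockProj β k (xstar - t • v) = (1 - t) • v := by
          rw [blockProj_sub, blockProj_smul, hvproj, ← hv]
          ext i
          simp [PiLp.sub_apply, PiLp.smul_apply, sub_smul, one_smul]
        rw [hblock k (xstar - t • v), h1, hhomog k (1 - t) (by linarith) v]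
        rw [hΩxstar]; simp; ring
      · have h1 : blockProj β k (xstar - t • v) = blockProj β k xstar := by
          rw [blockProj_sub, blockProj_smul, hv, blockProj_ne β hk, smul_zero, sub_zero]
        rw [hblock k (xstar - t • v), h1, ← hblock k xstar]
        simp [hk]
    simp only [key, Finset.sum_sub_distrib, Finset.sum_ite_eq', Finset.mem_univ, if_pos]
  -- minimality inequality
  have hineq : ∀ t : ℝ, 0 < t → t ≤ 1 →
      lam * Ωb j v ≤ (F (xstar - t • v) - F xstar) / t := by
    intro t ht ht1
    have := hmin (xstar - t • v)
    rw [hP] at this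
    simp only at this
    rw [hsum t ht.le ht1] at this
    rw [le_div_iff₀ ht]
    nlinarith
  -- directional derivative
  have hpath : HasDerivAt (fun t : ℝ => xstar - t • v) (-v) 0 := by
    have h1 : HasDerivAt (fun t : ℝ => t • v) v 0 := by
      simpa using (hasDerivAt_id (0:ℝ)).smul_const v
    have h2 := (hasDerivAt_const (0:ℝ) xstar).sub h1; rw [zero_sub] at h2; exact h2
  have hcomp : HasDerivAt (fun t : ℝ => F (xstar - t • v)) (fderiv ℝ F xstar (-v)) 0 := by
    have h0 : xstar - (0:ℝ) • v = xstar := by simp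
    have hF : HasFDerivAt F (fderiv ℝ F xstar) (xstar - (0:ℝ) • v) := by
      rw [h0]; exact hdiff.hasFDerivAt
    exact hF.comp_hasDerivAt 0 hpath
  have hslope := hasDerivAt_iff_tendsto_slope.mp hcomp
  have hslope' : Filter.Tendsto (slope (fun t : ℝ => F (xstar - t • v)) 0)
      (nhdsWithin 0 (Set.Ioi 0)) (nhds (fderiv ℝ F xstar (-v))) :=
    hslope.mono_left (nhdsWithin_mono 0 (fun x hx => ne_of_gt hx))
  have hlimle : lam * Ωb j v ≤ fderiv ℝ F xstar (-v) := by
    refine ge_of_tendsto hslope' ?_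
    filter_upwards [Ioc_mem_nhdsGT_of_mem (Set.left_mem_Ico.mpr one_pos)] with t ht
    have h1 := hineq t ht.1 ht.2
    have h2 : slope (fun t : ℝ => F (xstar - t • v)) 0 t
        = (F (xstar - t • v) - F xstar) / t := by
      rw [slope_def_field]; simp
    rw [h2]; exact h1
  -- relate fderiv to gradient
  have hgrad : fderiv ℝ F xstar (-v) = ⟪-gradient F xstar, v⟫ := by
    rw [inner_neg_left, gradient]
    rw [InnerProductSpace.toDual_symm_apply]
    simp
  have := hbound v hvproj
  rw [← hgrad] at this
  have : lam * Ωb j v ≤ c * Ωb j v := le_trans hlimle this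
  nlinarith
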